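/- Let D1, D3 : ℝ → ℝ satisfy D1(t) + D3(t) = ∫_0^t exp(2(e^{-s}-1))·e^{-s} ds (the first-line density of the discrete parking process on ℤ, obtained from (D1+D3)' = (f0+f2)^2·e^{-t} with f0+f2 = exp(e^{-t}-1) and D1(0)+D3(0)=0). Then lim_{t→∞} (D1(t)+D3(t)) = (1 - e^{-2})/2. -/

import Mathlib

open Real Filter Topology

/-
The integrand is the derivative of `-exp (2 * (exp (-s) - 1)) / 2`, so the density equals
`(1 - exp (2 * (exp (-t) - 1))) / 2`, and `exp (-t) → 0` gives the limit `(1 - exp (-2)) / 2`.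
-/

lemma hasDerivAt_exp_mul_exp_neg_sub_one (c s : ℝ) :
    HasDerivAt (fun x => exp (c * (exp (-x) - 1)))
      (-c * (exp (c * (exp (-s) - 1)) * exp (-s))) s := by
  have hinner : HasDerivAt (fun x => c * (exp (-x) - 1)) (c * -exp (-s)) s :=
    (((hasDerivAt_neg s).exp).sub_const 1).const_mul c |>.congr_deriv (by ring)
  exact hinner.exp.congr_deriv (by ring)

lemma integral_exp_mul_exp_neg_sub_one_mul_exp_neg {c : ℝ} (hc : c ≠ 0) (t : ℝ) :
    ∫ s in (0:ℝ)..t, exp (c * (exp (-s) - 1)) * exp (-s) = (1 - exp (c * (exp (-t) - 1))) / c := by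
  have hderiv (s : ℝ) : HasDerivAt (fun x => -exp (c * (exp (-x) - 1)) / c)
      (exp (c * (exp (-s) - 1)) * exp (-s)) s :=
    ((hasDerivAt_exp_mul_exp_neg_sub_one c s).neg.div_const c).congr_deriv (by field_simp)
  rw [intervalIntegral.integral_eq_sub_of_hasDerivAt (fun s _ => hderiv s)
    (by apply Continuous.intervalIntegrable; fun_prop)]
  simp only [neg_zero, exp_zero, sub_self, mul_zero]
  ring

lemma tendsto_exp_mul_exp_neg_sub_one (c : ℝ) :
    Tendsto (fun t => exp (c * (exp (-t) - 1))) atTop (𝓝 (exp (-c))) := by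
  have h : Tendsto (fun t => c * (exp (-t) - 1)) atTop (𝓝 (-c)) := by
    simpa using (tendsto_exp_neg_atTop_nhds_zero.sub_const 1).const_mul c
  exact (continuous_exp.tendsto _).comp h

theorem first_line_density_limit
    (D1 D3 : ℝ → ℝ)
    (h : ∀ t, D1 t + D3 t = ∫ s in (0:ℝ)..t, exp (2 * (exp (-s) - 1)) * exp (-s)) :
    Tendsto (fun t => D1 t + D3 t) atTop (nhds ((1 - exp (-2)) / 2)) := by
  simp only [h, integral_exp_mul_exp_neg_sub_one_mul_exp_neg two_ne_zero]
  exact ((tendsto_exp_mul_exp_neg_sub_one 2).const_sub 1).div_const 2
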